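/- arXiv:1801.02333 — 5 statements merged into one kernel-verified Lean document; each statement's English description precedes it below -/
import Mathlib

section
/- Let T > 0 and let a, b : [0,T] → [0,∞) be differentiable, let α : [0,T] → [0,∞) be continuous, and let λ ≥ 4·max{1, sup_{[0,T]} α}. Assume that on (0,T): |a'(s)| ≤ b(s) and b'(s) ≤ λ(α(s)·a(s) − b(s)). If b(0) = 0, then for all t ∈ [0,T] one has b(t) ≤ 2·(sup_{[0,T]} α)·a(t). -/
open Set

/-- ODE comparison lemma (Lemma `ODEEstimates (ii)` of the paper):
if `|a'| ≤ b` and `b' ≤ λ(α a − b)` on `(0,T)`, with `a, b ≥ 0`, `α ≥ 0` continuous,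
`λ ≥ 4 max{1, sup α}` and `b(0) = 0`, then `b(t) ≤ 2 (sup α) a(t)` on `[0,T]`. -/
theorem ode_estimates_two
    (T : ℝ) (hT : 0 < T) (a b α : ℝ → ℝ) (lam : ℝ)
    (ha0 : ∀ t ∈ Icc (0 : ℝ) T, 0 ≤ a t)
    (hb0 : ∀ t ∈ Icc (0 : ℝ) T, 0 ≤ b t)
    (hadiff : DifferentiableOn ℝ a (Icc 0 T))
    (hbdiff : DifferentiableOn ℝ b (Icc 0 T))
    (hαcont : ContinuousOn α (Icc 0 T))
    (hα0 : ∀ t ∈ Icc (0 : ℝ) T, 0 ≤ α t)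
    (hlam : 4 * max 1 (sSup (α '' Icc 0 T)) ≤ lam)
    (ha' : ∀ s ∈ Ioo (0 : ℝ) T, |derivWithin a (Icc 0 T) s| ≤ b s)
    (hb' : ∀ s ∈ Ioo (0 : ℝ) T,
      derivWithin b (Icc 0 T) s ≤ lam * (α s * a s - b s))
    (hb0' : b 0 = 0) :
    ∀ t ∈ Icc (0 : ℝ) T, b t ≤ 2 * sSup (α '' Icc 0 T) * a t := by
  set M := sSup (α '' Icc 0 T) with hM
  have h0T : (0 : ℝ) ∈ Icc (0 : ℝ) T := ⟨le_refl 0, hT.le⟩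
  have hbdd : BddAbove (α '' Icc 0 T) :=
    (isCompact_Icc.image_of_continuousOn hαcont).bddAbove
  have hMle : ∀ s ∈ Icc (0 : ℝ) T, α s ≤ M := fun s hs =>
    le_csSup hbdd (mem_image_of_mem α hs)
  have hM0 : 0 ≤ M := le_trans (hα0 0 h0T) (hMle 0 h0T)
  have hlamM : 4 * M ≤ lam :=
    le_trans (by nlinarith [le_max_right (1 : ℝ) M]) hlam
  have hlam4 : (4 : ℝ) ≤ lam :=
    le_trans (by nlinarith [le_max_left (1 : ℝ) M]) hlam
  set φ : ℝ → ℝ := fun u => b u - 2 * M * a u with hφ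
  set g : ℝ → ℝ := fun x =>
    derivWithin b (Icc 0 T) x - 2 * M * derivWithin a (Icc 0 T) x with hg
  set K : ℝ := 2 * M - lam with hK
  have hKle : K ≤ 0 := by nlinarith
  -- derivative of φ at interior points
  have hderiv : ∀ x ∈ Ioo (0 : ℝ) T, HasDerivAt φ (g x) x := by
    intro x hx
    have hmem : Icc (0 : ℝ) T ∈ nhds x :=
      Filter.mem_of_superset (isOpen_Ioo.mem_nhds hx) Ioo_subset_Icc_self
    have hxI : x ∈ Icc (0 : ℝ) T := Ioo_subset_Icc_self hx
    have hb1 : DifferentiableAt ℝ b x :=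
      (hbdiff x hxI).differentiableAt hmem
    have ha1 : DifferentiableAt ℝ a x :=
      (hadiff x hxI).differentiableAt hmem
    have hbd : derivWithin b (Icc 0 T) x = deriv b x := derivWithin_of_mem_nhds hmem
    have had : derivWithin a (Icc 0 T) x = deriv a x := derivWithin_of_mem_nhds hmem
    have : HasDerivAt φ (deriv b x - 2 * M * deriv a x) x :=
      hb1.hasDerivAt.sub ((ha1.hasDerivAt.const_mul (2 * M)))
    simpa [hg, hbd, had] using this
  have hφcont : ContinuousOn φ (Icc 0 T) :=
    hbdiff.continuousOn.sub (continuousOn_const.mul hadiff.continuousOn)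
  -- differential inequality for φ
  have hbound : ∀ x ∈ Ioo (0 : ℝ) T, g x ≤ K * φ x := by
    intro x hx
    have hxI : x ∈ Icc (0 : ℝ) T := Ioo_subset_Icc_self hx
    have h1 := ha' x hx
    have h2 := hb' x hx
    have h3 := hα0 x hxI
    have h4 := hMle x hxI
    have h5 := ha0 x hxI
    have h6 := hb0 x hxI
    have h1' : -(b x) ≤ derivWithin a (Icc 0 T) x := (abs_le.1 h1).1
    simp only [hg, hφ, hK]
    nlinarith [mul_nonneg hM0 h5, mul_nonneg hM0 h6,
      mul_nonneg (mul_nonneg hM0 (by linarith : (0:ℝ) ≤ lam - 4 * M)) h5,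
      mul_le_mul_of_nonneg_left h4 (mul_nonneg (by linarith : (0:ℝ) ≤ lam) h5)]
  -- Gronwall on [s, T] for 0 < s
  have hgron : ∀ s ∈ Ioc (0 : ℝ) T, ∀ t ∈ Icc s T, φ t ≤ max (φ s) 0 := by
    intro s hs t ht
    have key := le_gronwallBound_of_liminf_deriv_right_le (f := φ) (f' := g)
      (δ := max (φ s) 0) (K := K) (ε := 0) (a := s) (b := T)
      (hφcont.mono (Icc_subset_Icc hs.1.le le_rfl))
      (fun x hx r hr => by
        have hxIoo : x ∈ Ioo (0 : ℝ) T := ⟨lt_of_lt_of_le hs.1 hx.1, hx.2⟩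
        have := (hasDerivAt_iff_tendsto_slope.1 (hderiv x hxIoo))
        have h2 : Filter.Tendsto (slope φ x) (nhdsWithin x (Ioi x)) (nhds (g x)) :=
          this.mono_left (nhdsWithin_mono x (by intro z hz; exact ne_of_gt hz))
        have h3 : ∀ᶠ z in nhdsWithin x (Ioi x), slope φ x z < r :=
          h2.eventually_lt_const hr
        exact h3.frequently.mono (fun z hz => by
          simpa [slope_def_field, div_eq_inv_mul] using hz))
      (le_max_left _ _)
      (fun x hx => by
        have hxIoo : x ∈ Ioo (0 : ℝ) T := ⟨lt_of_lt_of_le hs.1 hx.1, hx.2⟩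
        simpa using hbound x hxIoo)
      t ht
    have : gronwallBound (max (φ s) 0) K 0 (t - s) ≤ max (φ s) 0 := by
      rw [gronwallBound_ε0]
      have hexp : Real.exp (K * (t - s)) ≤ 1 := by
        rw [Real.exp_le_one_iff]
        exact mul_nonpos_of_nonpos_of_nonneg hKle (by linarith [ht.1])
      exact mul_le_of_le_one_right (le_max_right _ _) hexp
    exact key.trans this
  -- conclude
  intro t ht
  rcases eq_or_lt_of_le ht.1 with h | h
  · rw [← h, hb0']
    exact mul_nonneg (by positivity) (ha0 0 h0T)
  · -- t > 0 : let s → 0⁺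
    have hφ0 : φ 0 ≤ 0 := by
      simp only [hφ, hb0']
      nlinarith [ha0 0 h0T]
    have hne : (nhdsWithin (0:ℝ) (Ioc 0 (min t T))).NeBot := by
      exact left_nhdsWithin_Ioc_neBot (lt_min h hT)
    have hsub : Ioc (0:ℝ) (min t T) ⊆ Icc 0 T := fun z hz =>
      ⟨hz.1.le, hz.2.trans (min_le_right _ _)⟩
    have hcont0 : Filter.Tendsto φ (nhdsWithin (0:ℝ) (Ioc 0 (min t T))) (nhds (φ 0)) :=
      (hφcont 0 h0T).mono_left (nhdsWithin_mono 0 hsub)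
    have htend : Filter.Tendsto (fun s => max (φ s) 0)
        (nhdsWithin (0:ℝ) (Ioc 0 (min t T))) (nhds 0) := by
      have : Filter.Tendsto (fun s => max (φ s) 0)
          (nhdsWithin (0:ℝ) (Ioc 0 (min t T))) (nhds (max (φ 0) 0)) :=
        hcont0.max tendsto_const_nhds
      simpa [max_eq_right hφ0] using this
    have hev : ∀ᶠ s in nhdsWithin (0:ℝ) (Ioc 0 (min t T)), φ t ≤ max (φ s) 0 := by
      filter_upwards [self_mem_nhdsWithin] with s hs
      exact hgron s ⟨hs.1, hs.2.trans (min_le_right _ _)⟩ t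
        ⟨hs.2.trans (min_le_left _ _), ht.2⟩
    have : φ t ≤ 0 := ge_of_tendsto htend hev
    simp only [hφ] at this
    linarith
end

section
/- Let T > 0, g ∈ ℝ³, let α : [0,T] → [0,∞) be continuous, let u : [0,T] × ℝ³ → ℝ³ satisfy |u(s,x) − u(s,y)| ≤ α(s)·|x − y| for all s ∈ [0,T] and x, y ∈ ℝ³, and let λ ≥ 4·max{1, sup_{[0,T]} α}. Fix t ∈ [0,T], x ∈ ℝ³ and v₁, v₂ ∈ ℝ³, and for i = 1, 2 let (X_i, V_i) : [0,T] → ℝ³ × ℝ³ be differentiable solutions of the characteristic system X_i'(s) = V_i(s), V_i'(s) = λ(g + u(s, X_i(s)) − V_i(s)) with terminal conditions X_i(t) = x, V_i(t) = v_i. Set M(t) := exp(∫_0^t 2α(τ) dτ). Then M(t)^{-1}·e^{λt}·|v₁ − v₂| ≤ |V₁(0) − V₂(0)| ≤ M(t)·e^{λt}·|v₁ − v₂|. -/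
open Set

local notation "E3" => EuclideanSpace ℝ (Fin 3)

/-!
Write `Y = X₁ - X₂` and `W = V₁ - V₂`, so that `Y' = W`, `Y(t) = 0`, and `P = e^{λs} W` satisfies
`|P'| = λ e^{λs} |u(s, X₁) - u(s, X₂)| ≤ α λ e^{λs} |Y|`. The heart of the proof is the cone
condition `λ |Y| ≤ 2 |W|` on `[0, t]`, obtained by a continuity argument run backwards from `t`:
while `λ e^{λs} |Y| ≤ 2 (|P| + η)` holds on `[σ, t]`, Gronwall lets `P` grow at most like
`e^{2ᾱ(s - σ)}` (`ᾱ` an upper bound of `α`), so `W` decays like `e^{-(λ - 2ᾱ)(s - σ)}`, and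
integrating `Y' = W` back from `t` gives the strict inequality at `σ` because `λ ≤ 2 (λ - 2ᾱ)`;
the slack `η > 0` keeps it strict where `W` vanishes and is sent to `0` afterwards.
Inside the cone `|P'| ≤ 2 α |P|`, and Gronwall forwards and backwards in time gives both bounds.
-/

open Real

section

variable {E : Type*} [NormedAddCommGroup E] [NormedSpace ℝ E]

theorem hasDerivWithinAt_integral_Icc {β : ℝ → ℝ} {a b x : ℝ} (hβ : ContinuousOn β (Icc a b))
    (hx : x ∈ Icc a b) :
    HasDerivWithinAt (fun y => ∫ s in a..y, β s) (β x) (Icc a b) x := by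
  have : Fact (x ∈ Icc a b) := ⟨hx⟩
  exact intervalIntegral.integral_hasDerivWithinAt_right
    (hβ.mono (uIcc_subset_Icc (left_mem_Icc.2 (hx.1.trans hx.2)) hx)).intervalIntegrable
    (hβ.stronglyMeasurableAtFilter_nhdsWithin measurableSet_Icc x) (hβ x hx)

theorem norm_add_le_mul_exp_integral_of_norm_deriv_le {f f' : ℝ → E} {β : ℝ → ℝ} {a b η : ℝ}
    (hf : ∀ x ∈ Icc a b, HasDerivWithinAt f (f' x) (Icc a b) x) (hβ : ContinuousOn β (Icc a b))
    (hη : 0 ≤ η) (bound : ∀ x ∈ Icc a b, ‖f' x‖ ≤ β x * (‖f x‖ + η)) :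
    ∀ x ∈ Icc a b, ‖f x‖ + η ≤ (‖f a‖ + η) * exp (∫ s in a..x, β s) := by
  intro x hx
  set I : ℝ → ℝ := fun y => ∫ s in a..y, β s
  have fence : ∀ ε > 0, ‖f x‖ + η ≤ (‖f a‖ + η + ε) * exp (I x + ε * (x - a)) := by
    intro ε hε
    set B : ℝ → ℝ := fun y => (‖f a‖ + η + ε) * exp (I y + ε * (y - a)) - η
    have hB : ∀ y ∈ Icc a b, HasDerivWithinAt B ((β y + ε) * (B y + η)) (Icc a b) y := by
      intro y hy
      have hexponent : HasDerivWithinAt (fun y => I y + ε * (y - a)) (β y + ε) (Icc a b) y :=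
        ((hasDerivWithinAt_integral_Icc hβ hy).add
          (((hasDerivWithinAt_id y _).sub_const a).const_mul ε)).congr_deriv (by ring)
      exact ((hexponent.exp.const_mul _).sub_const η).congr_deriv (by simp only [B]; ring)
    have key := image_norm_le_of_norm_deriv_right_lt_deriv_boundary'
      (fun y hy => (hf y hy).continuousWithinAt)
      (fun y hy => (hf y (Ico_subset_Icc_self hy)).mono_of_mem_nhdsWithin
        (Icc_mem_nhdsGE_of_mem hy))
      (B := B)
      (by simp only [intervalIntegral.integral_same, sub_self, mul_zero, add_zero, exp_zero,
            mul_one, B, I]; linarith)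
      (fun y hy => (hB y hy).continuousWithinAt)
      (fun y hy => (hB y (Ico_subset_Icc_self hy)).mono_of_mem_nhdsWithin
        (Icc_mem_nhdsGE_of_mem hy))
      (fun y hy hfy => by
        have hpos : 0 < B y + η := by
          simp only [B, sub_add_cancel]
          have := norm_nonneg (f a)
          positivity
        calc ‖f' y‖ ≤ β y * (‖f y‖ + η) := bound y (Ico_subset_Icc_self hy)
          _ < (β y + ε) * (B y + η) := by rw [hfy]; nlinarith)
      hx
    simp only [B] at key
    linarith
  have hcont : Continuous fun ε => (‖f a‖ + η + ε) * exp (I x + ε * (x - a)) := by fun_prop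
  have := ge_of_tendsto ((hcont.tendsto 0).mono_left nhdsWithin_le_nhds)
    (eventually_nhdsWithin_of_forall (s := Ioi 0) fence)
  simpa using this

theorem norm_add_le_mul_exp_integral_of_norm_deriv_le_rev {f f' : ℝ → E} {β : ℝ → ℝ}
    {a b η : ℝ} (hf : ∀ x ∈ Icc a b, HasDerivWithinAt f (f' x) (Icc a b) x)
    (hβ : ContinuousOn β (Icc a b)) (hη : 0 ≤ η)
    (bound : ∀ x ∈ Icc a b, ‖f' x‖ ≤ β x * (‖f x‖ + η)) :
    ∀ x ∈ Icc a b, ‖f x‖ + η ≤ (‖f b‖ + η) * exp (∫ s in x..b, β s) := by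
  intro x hx
  have hrefl : MapsTo (fun r => a + b - r) (Icc a b) (Icc a b) := fun r hr =>
    ⟨by linarith [hr.2], by linarith [hr.1]⟩
  have key := norm_add_le_mul_exp_integral_of_norm_deriv_le
    (f := fun r => f (a + b - r)) (f' := fun r => -f' (a + b - r))
    (fun r hr => ((hf _ (hrefl hr)).scomp r ((hasDerivWithinAt_id r _).const_sub (a + b))
      hrefl).congr_deriv (by simp))
    (hβ.comp (continuousOn_const.sub continuousOn_id) hrefl) hη
    (fun r hr => by simpa using bound _ (hrefl hr)) _ (hrefl hx)
  simpa [intervalIntegral.integral_comp_sub_left] using key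

theorem norm_sub_le_of_norm_deriv_le_mul_exp_neg {f f' : ℝ → E} {a b K c : ℝ} (hab : a ≤ b)
    (hc : c ≠ 0) (hf : ∀ x ∈ Icc a b, HasDerivWithinAt f (f' x) (Icc a b) x)
    (bound : ∀ x ∈ Icc a b, ‖f' x‖ ≤ K * exp (-c * (x - a))) :
    ‖f b - f a‖ ≤ K * (1 - exp (-c * (b - a))) / c := by
  have hB : ∀ x, HasDerivAt (fun x => K * (1 - exp (-c * (x - a))) / c)
      (K * exp (-c * (x - a))) x := fun x =>
    (((((hasDerivAt_id x).sub_const a).const_mul (-c)).exp.const_sub 1).const_mul K).div_const c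
      |>.congr_deriv (by simp only [id]; field_simp)
  refine image_norm_le_of_norm_deriv_right_le_deriv_boundary (f := fun x => f x - f a)
    (fun x hx => ((hf x hx).sub_const (f a)).continuousWithinAt)
    (fun x hx => ((hf x (Ico_subset_Icc_self hx)).sub_const (f a)).mono_of_mem_nhdsWithin
      (Icc_mem_nhdsGE_of_mem hx)) (by simp) hB
    (fun x hx => bound x (Ico_subset_Icc_self hx)) (right_mem_Icc.2 hab)

theorem ContinuousOn.forall_lt_zero_of_backward_step {Z : ℝ → ℝ} {a b : ℝ}
    (hZ : ContinuousOn Z (Icc a b)) (hb : Z b ≤ 0)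
    (step : ∀ σ ∈ Icc a b, (∀ ρ ∈ Icc σ b, Z ρ ≤ 0) → Z σ < 0) :
    ∀ σ ∈ Icc a b, Z σ < 0 := by
  by_contra! hbad
  obtain ⟨σ₀, ⟨hσ₀, hZσ₀⟩, hmax⟩ :=
    (isCompact_Icc.of_isClosed_subset (hZ.preimage_isClosed_of_isClosed isClosed_Icc isClosed_Ici)
      inter_subset_left).exists_isGreatest (s := Icc a b ∩ Z ⁻¹' Ici 0) hbad
  have hright : ∀ ρ ∈ Ioc σ₀ b, Z ρ ≤ 0 := fun ρ hρ => by
    by_contra! h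
    exact absurd (hmax ⟨⟨hσ₀.1.trans hρ.1.le, hρ.2⟩, h.le⟩) (not_le.2 hρ.1)
  have hclosed : ∀ ρ ∈ Icc σ₀ b, Z ρ ≤ 0 := by
    rcases hσ₀.2.eq_or_lt with rfl | hlt
    · intro ρ hρ
      rwa [le_antisymm hρ.2 hρ.1]
    have hK : IsClosed (Icc σ₀ b ∩ Z ⁻¹' Iic 0) :=
      (hZ.mono (Icc_subset_Icc_left hσ₀.1)).preimage_isClosed_of_isClosed isClosed_Icc isClosed_Iic
    rw [← closure_Ioc hlt.ne]
    have hsub : Ioc σ₀ b ⊆ Icc σ₀ b ∩ Z ⁻¹' Iic 0 := fun r hr =>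
      ⟨Ioc_subset_Icc_self hr, hright r hr⟩
    exact fun ρ hρ => (closure_minimal hsub hK hρ).2
  exact absurd hZσ₀ (not_le.2 (step σ₀ hσ₀ hclosed))

namespace DampedSystem

variable {Y W P' : ℝ → E} {a t lam abar : ℝ}

theorem lam_mul_exp_mul_norm_lt_of_forall_le
    (hY : ∀ s ∈ Icc a t, HasDerivWithinAt Y (W s) (Icc a t) s)
    (hP : ∀ s ∈ Icc a t, HasDerivWithinAt (fun r => exp (lam * r) • W r) (P' s) (Icc a t) s)
    (hP' : ∀ s ∈ Icc a t, ‖P' s‖ ≤ abar * (lam * exp (lam * s) * ‖Y s‖))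
    (hYt : Y t = 0) (habar : 0 ≤ abar) (hlam : 4 * abar ≤ lam) (hlam0 : 0 < lam)
    {η σ : ℝ} (hη : 0 < η) (hσ : σ ∈ Icc a t)
    (hcone : ∀ ρ ∈ Icc σ t, lam * exp (lam * ρ) * ‖Y ρ‖ ≤ 2 * (‖exp (lam * ρ) • W ρ‖ + η)) :
    lam * exp (lam * σ) * ‖Y σ‖ < 2 * (‖exp (lam * σ) • W σ‖ + η) := by
  have hsub : Icc σ t ⊆ Icc a t := Icc_subset_Icc_left hσ.1
  set R := ‖exp (lam * σ) • W σ‖ + η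
  have hR : 0 < R := by positivity
  have hgrowth : ∀ ρ ∈ Icc σ t,
      ‖exp (lam * ρ) • W ρ‖ + η ≤ R * exp (2 * abar * (ρ - σ)) := by
    intro ρ hρ
    have := norm_add_le_mul_exp_integral_of_norm_deriv_le (β := fun _ => 2 * abar)
      (fun r hr => (hP r (hsub hr)).mono hsub) continuousOn_const hη.le
      (fun r hr => (hP' r (hsub hr)).trans
        ((mul_le_mul_of_nonneg_left (hcone r hr) habar).trans_eq (by ring))) ρ hρ
    rw [intervalIntegral.integral_const, smul_eq_mul, mul_comm (ρ - σ)] at this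
    exact this
  set c := lam - 2 * abar with hc_def
  have hdecay : ∀ ρ ∈ Icc σ t, ‖W ρ‖ ≤ exp (-(lam * σ)) * R * exp (-c * (ρ - σ)) := by
    intro ρ hρ
    have h := hgrowth ρ hρ
    rw [norm_smul_of_nonneg (exp_pos _).le] at h
    refine le_of_mul_le_mul_left ?_ (exp_pos (lam * ρ))
    calc exp (lam * ρ) * ‖W ρ‖ ≤ R * exp (2 * abar * (ρ - σ)) := by linarith
      _ = exp (lam * ρ) * (exp (-(lam * σ)) * R * exp (-c * (ρ - σ))) := by
        have : 2 * abar * (ρ - σ) = lam * ρ + -(lam * σ) + -c * (ρ - σ) := by rw [hc_def]; ring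
        rw [this, exp_add, exp_add]
        ring
  have hc : lam ≤ 2 * c := by linarith
  have hc0 : 0 < c := by linarith
  have hYσ := norm_sub_le_of_norm_deriv_le_mul_exp_neg hσ.2 hc0.ne'
    (fun r hr => (hY r (hsub hr)).mono hsub) hdecay
  rw [hYt, zero_sub, norm_neg] at hYσ
  have hone_sub_lt : 1 - exp (-c * (t - σ)) < 1 := by linarith [exp_pos (-c * (t - σ))]
  calc lam * exp (lam * σ) * ‖Y σ‖
      ≤ lam * exp (lam * σ) * (exp (-(lam * σ)) * R * (1 - exp (-c * (t - σ))) / c) := by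
        gcongr
    _ = lam * R * (1 - exp (-c * (t - σ))) / c := by
        rw [mul_div_assoc', ← mul_assoc, ← mul_assoc, mul_assoc lam, ← exp_add]
        simp [mul_assoc]
    _ < lam * R / c :=
        div_lt_div_of_pos_right (mul_lt_of_lt_one_right (mul_pos hlam0 hR) hone_sub_lt) hc0
    _ ≤ 2 * R := by rw [div_le_iff₀ hc0]; nlinarith

theorem lam_mul_norm_le_two_mul_norm
    (hY : ∀ s ∈ Icc a t, HasDerivWithinAt Y (W s) (Icc a t) s)
    (hP : ∀ s ∈ Icc a t, HasDerivWithinAt (fun r => exp (lam * r) • W r) (P' s) (Icc a t) s)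
    (hP' : ∀ s ∈ Icc a t, ‖P' s‖ ≤ abar * (lam * exp (lam * s) * ‖Y s‖))
    (hYt : Y t = 0) (habar : 0 ≤ abar) (hlam : 4 * abar ≤ lam) (hlam0 : 0 < lam) :
    ∀ s ∈ Icc a t, lam * ‖Y s‖ ≤ 2 * ‖W s‖ := by
  intro s hs
  refine le_of_forall_pos_lt_add fun ε hε => ?_
  have hYc : ContinuousOn Y (Icc a t) := fun r hr => (hY r hr).continuousWithinAt
  have hPc : ContinuousOn (fun r => exp (lam * r) • W r) (Icc a t) := fun r hr =>
    (hP r hr).continuousWithinAt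
  set η := exp (lam * s) * ε / 2 with hη
  have hZ : ContinuousOn
      (fun ρ => lam * exp (lam * ρ) * ‖Y ρ‖ - 2 * (‖exp (lam * ρ) • W ρ‖ + η)) (Icc a t) := by
    fun_prop
  have hneg := hZ.forall_lt_zero_of_backward_step
    (by simp only [hYt, norm_zero, mul_zero, zero_sub, neg_nonpos]; positivity)
    (fun σ hσ h => sub_neg.2 (lam_mul_exp_mul_norm_lt_of_forall_le hY hP hP' hYt habar hlam
      hlam0 (by positivity) hσ fun ρ hρ => sub_nonpos.1 (h ρ hρ))) s hs
  rw [norm_smul_of_nonneg (exp_pos _).le] at hneg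
  refine lt_of_mul_lt_mul_left ?_ (exp_pos (lam * s)).le
  linarith [hη]

theorem weighted_norm_bounds {α : ℝ → ℝ} (hat : a ≤ t)
    (hY : ∀ s ∈ Icc a t, HasDerivWithinAt Y (W s) (Icc a t) s)
    (hP : ∀ s ∈ Icc a t, HasDerivWithinAt (fun r => exp (lam * r) • W r) (P' s) (Icc a t) s)
    (hP' : ∀ s ∈ Icc a t, ‖P' s‖ ≤ α s * (lam * exp (lam * s) * ‖Y s‖))
    (hα : ContinuousOn α (Icc a t)) (hα0 : ∀ s ∈ Icc a t, 0 ≤ α s)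
    (hαle : ∀ s ∈ Icc a t, α s ≤ abar) (hYt : Y t = 0) (hlam : 4 * abar ≤ lam)
    (hlam0 : 0 < lam) :
    ‖exp (lam * t) • W t‖ ≤ ‖exp (lam * a) • W a‖ * exp (∫ s in a..t, 2 * α s) ∧
      ‖exp (lam * a) • W a‖ ≤ ‖exp (lam * t) • W t‖ * exp (∫ s in a..t, 2 * α s) := by
  have hta : t ∈ Icc a t := right_mem_Icc.2 hat
  have hcone := lam_mul_norm_le_two_mul_norm hY hP (fun s hs => (hP' s hs).trans
      (mul_le_mul_of_nonneg_right (hαle s hs) (by positivity))) hYt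
    ((hα0 t hta).trans (hαle t hta)) hlam hlam0
  have hgrowth : ∀ s ∈ Icc a t, ‖P' s‖ ≤ 2 * α s * (‖exp (lam * s) • W s‖ + 0) := by
    intro s hs
    rw [add_zero, norm_smul_of_nonneg (exp_pos _).le]
    calc ‖P' s‖ ≤ α s * (exp (lam * s) * (lam * ‖Y s‖)) := (hP' s hs).trans_eq (by ring)
      _ ≤ α s * (exp (lam * s) * (2 * ‖W s‖)) :=
        mul_le_mul_of_nonneg_left (mul_le_mul_of_nonneg_left (hcone s hs) (exp_pos _).le)
          (hα0 s hs)
      _ = 2 * α s * (exp (lam * s) * ‖W s‖) := by ring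
  have hβ : ContinuousOn (fun s => 2 * α s) (Icc a t) := continuousOn_const.mul hα
  have fwd := norm_add_le_mul_exp_integral_of_norm_deriv_le hP hβ le_rfl hgrowth t hta
  have rev := norm_add_le_mul_exp_integral_of_norm_deriv_le_rev hP hβ le_rfl hgrowth a
    (left_mem_Icc.2 hat)
  simp only [add_zero] at fwd rev
  exact ⟨fwd, rev⟩

end DampedSystem

theorem hasDerivWithinAt_exp_smul_of_relaxation {V : ℝ → E} {F : E} {lam s : ℝ} {S : Set ℝ}
    (h : HasDerivWithinAt V (lam • (F - V s)) S s) :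
    HasDerivWithinAt (fun r => exp (lam * r) • V r) ((lam * exp (lam * s)) • F) S s :=
  (((hasDerivWithinAt_id s S).const_mul lam).exp.smul h).congr_deriv (by simp only [id]; module)

end

theorem characteristics_biLipschitz_general
    (T : ℝ) (g : E3) (α : ℝ → ℝ)
    (hαcont : ContinuousOn α (Icc 0 T))
    (hα0 : ∀ s ∈ Icc (0 : ℝ) T, 0 ≤ α s)
    (u : ℝ → E3 → E3)
    (hu : ∀ s ∈ Icc (0 : ℝ) T, ∀ x y : E3, ‖u s x - u s y‖ ≤ α s * ‖x - y‖)
    (lam : ℝ) (hlam : 4 * max 1 (sSup (α '' Icc 0 T)) ≤ lam)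
    (t : ℝ) (ht : t ∈ Icc (0 : ℝ) T) (x v₁ v₂ : E3)
    (X₁ V₁ X₂ V₂ : ℝ → E3)
    (hX₁ : ∀ s ∈ Icc (0 : ℝ) T, HasDerivWithinAt X₁ (V₁ s) (Icc 0 T) s)
    (hV₁ : ∀ s ∈ Icc (0 : ℝ) T,
      HasDerivWithinAt V₁ (lam • (g + u s (X₁ s) - V₁ s)) (Icc 0 T) s)
    (hX₂ : ∀ s ∈ Icc (0 : ℝ) T, HasDerivWithinAt X₂ (V₂ s) (Icc 0 T) s)
    (hV₂ : ∀ s ∈ Icc (0 : ℝ) T,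
      HasDerivWithinAt V₂ (lam • (g + u s (X₂ s) - V₂ s)) (Icc 0 T) s)
    (hX₁t : X₁ t = x) (hV₁t : V₁ t = v₁) (hX₂t : X₂ t = x) (hV₂t : V₂ t = v₂) :
    (Real.exp (∫ τ in (0 : ℝ)..t, 2 * α τ))⁻¹ * Real.exp (lam * t) * ‖v₁ - v₂‖ ≤
        ‖V₁ 0 - V₂ 0‖ ∧
      ‖V₁ 0 - V₂ 0‖ ≤
        Real.exp (∫ τ in (0 : ℝ)..t, 2 * α τ) * Real.exp (lam * t) * ‖v₁ - v₂‖ := by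
  have hsub : Icc 0 t ⊆ Icc 0 T := Icc_subset_Icc_right ht.2
  have hαle : ∀ s ∈ Icc 0 T, α s ≤ max 1 (sSup (α '' Icc 0 T)) := fun s hs =>
    (le_csSup (isCompact_Icc.image_of_continuousOn hαcont).bddAbove (mem_image_of_mem α hs)).trans
      (le_max_right _ _)
  have hlam0 : 0 < lam := by linarith [le_max_left 1 (sSup (α '' Icc 0 T))]
  obtain ⟨fwd, rev⟩ := DampedSystem.weighted_norm_bounds (Y := fun s => X₁ s - X₂ s)
    (W := fun s => V₁ s - V₂ s) ht.1
    (fun s hs => ((hX₁ s (hsub hs)).sub (hX₂ s (hsub hs))).mono hsub)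
    (fun s hs => (hasDerivWithinAt_exp_smul_of_relaxation (F := u s (X₁ s) - u s (X₂ s))
      (((hV₁ s (hsub hs)).sub (hV₂ s (hsub hs))).congr_deriv
        (by rw [Pi.sub_apply]; module))).mono hsub)
    (fun s hs => by
      rw [norm_smul_of_nonneg (by positivity)]
      exact (mul_le_mul_of_nonneg_left (hu s (hsub hs) _ _) (by positivity)).trans_eq (by ring))
    (hαcont.mono hsub) (fun s hs => hα0 s (hsub hs)) (fun s hs => hαle s (hsub hs))
    (by simp [hX₁t, hX₂t]) hlam hlam0
  simp only [mul_zero, exp_zero, one_smul, hV₁t, hV₂t, norm_smul_of_nonneg (exp_pos _).le]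
    at fwd rev
  constructor
  · rw [mul_assoc, inv_mul_le_iff₀ (exp_pos _)]
    linarith
  · linarith

/-- Bi-Lipschitz estimate for the velocity component of the characteristic
flow: if `u(s,·)` is `α(s)`-Lipschitz, `λ ≥ 4 max{1, sup α}`, and `(Xᵢ, Vᵢ)` solve the
characteristic system `X' = V`, `V' = λ(g + u(s,X) − V)` with terminal data
`Xᵢ(t) = x`, `Vᵢ(t) = vᵢ`, then with `M(t) = exp(∫_0^t 2α)` we have
`M(t)⁻¹ e^{λt} |v₁ − v₂| ≤ |V₁(0) − V₂(0)| ≤ M(t) e^{λt} |v₁ − v₂|`. -/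
theorem characteristics_biLipschitz
    (T : ℝ) (hT : 0 < T) (g : E3) (α : ℝ → ℝ)
    (hαcont : ContinuousOn α (Icc 0 T))
    (hα0 : ∀ s ∈ Icc (0 : ℝ) T, 0 ≤ α s)
    (u : ℝ → E3 → E3)
    (hu : ∀ s ∈ Icc (0 : ℝ) T, ∀ x y : E3, ‖u s x - u s y‖ ≤ α s * ‖x - y‖)
    (lam : ℝ) (hlam : 4 * max 1 (sSup (α '' Icc 0 T)) ≤ lam)
    (t : ℝ) (ht : t ∈ Icc (0 : ℝ) T) (x v₁ v₂ : E3)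
    (X₁ V₁ X₂ V₂ : ℝ → E3)
    (hX₁ : ∀ s ∈ Icc (0 : ℝ) T, HasDerivWithinAt X₁ (V₁ s) (Icc 0 T) s)
    (hV₁ : ∀ s ∈ Icc (0 : ℝ) T,
      HasDerivWithinAt V₁ (lam • (g + u s (X₁ s) - V₁ s)) (Icc 0 T) s)
    (hX₂ : ∀ s ∈ Icc (0 : ℝ) T, HasDerivWithinAt X₂ (V₂ s) (Icc 0 T) s)
    (hV₂ : ∀ s ∈ Icc (0 : ℝ) T,
      HasDerivWithinAt V₂ (lam • (g + u s (X₂ s) - V₂ s)) (Icc 0 T) s)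
    (hX₁t : X₁ t = x) (hV₁t : V₁ t = v₁) (hX₂t : X₂ t = x) (hV₂t : V₂ t = v₂) :
    (Real.exp (∫ τ in (0 : ℝ)..t, 2 * α τ))⁻¹ * Real.exp (lam * t) * ‖v₁ - v₂‖ ≤
        ‖V₁ 0 - V₂ 0‖ ∧
      ‖V₁ 0 - V₂ 0‖ ≤
        Real.exp (∫ τ in (0 : ℝ)..t, 2 * α τ) * Real.exp (lam * t) * ‖v₁ - v₂‖ :=
  characteristics_biLipschitz_general T g α hαcont hα0 u hu lam hlam t ht x v₁ v₂ X₁ V₁ X₂ V₂ hX₁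
    hV₁ hX₂ hV₂ hX₁t hV₁t hX₂t hV₂t
end

section
/- Let g : ℝ³ → ℝ be a bounded function that is Lipschitz with constant L ≥ 0, let E, F ⊂ ℝ³ be bounded measurable sets, and let D ≥ 0 satisfy |x − y| ≤ D for all x ∈ E and y ∈ F. Then | ∫_E g dx − ∫_F g dx | ≤ |μ(E) − μ(F)| · ‖g‖_{L^∞(ℝ³)} + min{μ(E), μ(F)} · L · D, where μ denotes Lebesgue measure on ℝ³. -/
/-!
Let `c` be the average of `g` over the set of larger measure, say `F`. Then
`∫_E g - ∫_F g = ∫_E (g - c) + (μ E - μ F) c`, where `|c| ≤ ‖g‖_∞`, and `|g x - c| ≤ L D` for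
`x ∈ E` because `c` is an average of values `g y`, `y ∈ F`, each within `L D` of `g x`.
-/

open MeasureTheory

local notation "E3" => EuclideanSpace ℝ (Fin 3)

namespace MeasureTheory

variable {α E : Type*} [MeasurableSpace α] {μ : Measure α}
  [NormedAddCommGroup E] [NormedSpace ℝ E] {f : α → E} {s t : Set α}

theorem norm_setAverage_le_of_norm_le_const {C : ℝ} (hs₀ : μ s ≠ 0) (hs : μ s ≠ ⊤)
    (hC : ∀ x ∈ s, ‖f x‖ ≤ C) : ‖⨍ x in s, f x ∂μ‖ ≤ C := by
  have hpos : 0 < μ.real s := ENNReal.toReal_pos hs₀ hs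
  rw [setAverage_eq, norm_smul, norm_inv, Real.norm_of_nonneg hpos.le, inv_mul_le_iff₀ hpos,
    mul_comm]
  exact norm_setIntegral_le_of_norm_le_const hs.lt_top hC

theorem sub_setAverage [CompleteSpace E] (hs₀ : μ s ≠ 0) (hs : μ s ≠ ⊤) (hf : IntegrableOn f s μ)
    (a : E) : a - ⨍ x in s, f x ∂μ = ⨍ x in s, (a - f x) ∂μ := by
  have hpos : 0 < μ.real s := ENNReal.toReal_pos hs₀ hs
  rw [setAverage_eq, setAverage_eq, integral_sub (integrableOn_const (C := a) hs) hf,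
    setIntegral_const, smul_sub, inv_smul_smul₀ hpos.ne']

theorem norm_sub_setAverage_le [CompleteSpace E] {C : ℝ} (hs₀ : μ s ≠ 0) (hs : μ s ≠ ⊤)
    (hf : IntegrableOn f s μ) {a : E} (hC : ∀ x ∈ s, ‖a - f x‖ ≤ C) :
    ‖a - ⨍ x in s, f x ∂μ‖ ≤ C := by
  rw [sub_setAverage hs₀ hs hf]
  exact norm_setAverage_le_of_norm_le_const hs₀ hs hC

theorem norm_setIntegral_sub_setIntegral_le_of_measure_le [CompleteSpace E] {M C : ℝ}
    (hs : μ s ≠ ⊤) (ht : μ t ≠ ⊤) (hst : μ s ≤ μ t)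
    (hfs : IntegrableOn f s μ) (hft : IntegrableOn f t μ)
    (hM : ∀ y ∈ t, ‖f y‖ ≤ M) (hC : ∀ x ∈ s, ∀ y ∈ t, ‖f x - f y‖ ≤ C) :
    ‖∫ x in s, f x ∂μ - ∫ x in t, f x ∂μ‖ ≤ |μ.real s - μ.real t| * M + μ.real s * C := by
  rcases eq_or_ne (μ t) 0 with ht₀ | ht₀
  · have hs₀ : μ s = 0 := le_antisymm (ht₀ ▸ hst) zero_le
    simp [setIntegral_measure_zero, hs₀, ht₀, measureReal_def]
  set c := ⨍ y in t, f y ∂μ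
  have hdecomp : ∫ x in s, f x ∂μ - ∫ x in t, f x ∂μ =
      ∫ x in s, (f x - c) ∂μ + (μ.real s - μ.real t) • c := by
    rw [integral_sub hfs (integrableOn_const (C := c) hs), setIntegral_const,
      ← measure_smul_setAverage f ht, sub_smul]
    abel
  have hcM : ‖c‖ ≤ M := norm_setAverage_le_of_norm_le_const ht₀ ht hM
  have hfc : ∀ x ∈ s, ‖f x - c‖ ≤ C := fun x hx =>
    norm_sub_setAverage_le ht₀ ht hft (hC x hx)
  calc ‖∫ x in s, f x ∂μ - ∫ x in t, f x ∂μ‖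
      ≤ ‖∫ x in s, (f x - c) ∂μ‖ + |μ.real s - μ.real t| * ‖c‖ := by
        rw [hdecomp, ← Real.norm_eq_abs, ← norm_smul]
        exact norm_add_le _ _
    _ ≤ C * μ.real s + |μ.real s - μ.real t| * M := by
        gcongr
        exact norm_setIntegral_le_of_norm_le_const hs.lt_top hfc
    _ = |μ.real s - μ.real t| * M + μ.real s * C := by ring

theorem norm_setIntegral_sub_setIntegral_le [CompleteSpace E] {M C : ℝ}
    (hs : μ s ≠ ⊤) (ht : μ t ≠ ⊤) (hfs : IntegrableOn f s μ) (hft : IntegrableOn f t μ)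
    (hM : ∀ x, ‖f x‖ ≤ M) (hC : ∀ x ∈ s, ∀ y ∈ t, ‖f x - f y‖ ≤ C) :
    ‖∫ x in s, f x ∂μ - ∫ x in t, f x ∂μ‖ ≤
      |μ.real s - μ.real t| * M + min (μ.real s) (μ.real t) * C := by
  rcases le_total (μ s) (μ t) with hst | hts
  · rw [min_eq_left (show μ.real s ≤ μ.real t from ENNReal.toReal_mono ht hst)]
    exact norm_setIntegral_sub_setIntegral_le_of_measure_le hs ht hst hfs hft
      (fun y _ => hM y) hC
  · rw [min_eq_right (show μ.real t ≤ μ.real s from ENNReal.toReal_mono hs hts), norm_sub_rev, abs_sub_comm]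
    exact norm_setIntegral_sub_setIntegral_le_of_measure_le ht hs hts hft hfs
      (fun y _ => hM y) fun y hy x hx => norm_sub_rev (f x) (f y) ▸ hC x hx y hy

end MeasureTheory

theorem integral_same_function_different_sets_general
    (g : E3 → ℝ) (L D : ℝ) (hL : 0 ≤ L)
    (hgbd : BddAbove (Set.range fun x => |g x|))
    (hglip : ∀ x y : E3, |g x - g y| ≤ L * dist x y)
    (E F : Set E3)
    (hEbd : Bornology.IsBounded E) (hFbd : Bornology.IsBounded F)
    (hEF : ∀ x ∈ E, ∀ y ∈ F, dist x y ≤ D) :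
    |(∫ x in E, g x) - ∫ x in F, g x| ≤
      |(volume E).toReal - (volume F).toReal| * (⨆ x : E3, |g x|) +
        min (volume E).toReal (volume F).toReal * L * D := by
  have hM : ∀ x, ‖g x‖ ≤ ⨆ x : E3, |g x| := fun x => le_ciSup hgbd x
  have hg : AEStronglyMeasurable g volume :=
    (LipschitzWith.of_dist_le_mul (K := ⟨L, hL⟩) hglip).continuous.aestronglyMeasurable
  have hE := hEbd.measure_lt_top (μ := volume)
  have hF := hFbd.measure_lt_top (μ := volume)
  have hLD : ∀ x ∈ E, ∀ y ∈ F, ‖g x - g y‖ ≤ L * D := fun x hx y hy =>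
    (hglip x y).trans (mul_le_mul_of_nonneg_left (hEF x hx y hy) hL)
  rw [mul_assoc]
  exact norm_setIntegral_sub_setIntegral_le hE.ne hF.ne
    (Measure.integrableOn_of_bounded hE.ne hg (.of_forall hM))
    (Measure.integrableOn_of_bounded hF.ne hg (.of_forall hM)) hM hLD

/-- For a bounded `L`-Lipschitz function `g` and bounded measurable sets
`E, F ⊂ ℝ³` with `|x − y| ≤ D` for all `x ∈ E`, `y ∈ F`,
`|∫_E g − ∫_F g| ≤ ||E| − |F|| ‖g‖_∞ + min{|E|, |F|} L D`. -/
theorem integral_same_function_different_sets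
    (g : E3 → ℝ) (L D : ℝ) (hL : 0 ≤ L) (hD : 0 ≤ D)
    (hgbd : BddAbove (Set.range fun x => |g x|))
    (hglip : ∀ x y : E3, |g x - g y| ≤ L * dist x y)
    (E F : Set E3) (hE : MeasurableSet E) (hF : MeasurableSet F)
    (hEbd : Bornology.IsBounded E) (hFbd : Bornology.IsBounded F)
    (hEF : ∀ x ∈ E, ∀ y ∈ F, dist x y ≤ D) :
    |(∫ x in E, g x) - ∫ x in F, g x| ≤
      |(volume E).toReal - (volume F).toReal| * (⨆ x : E3, |g x|) +
        min (volume E).toReal (volume F).toReal * L * D :=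
  integral_same_function_different_sets_general g L D hL hgbd hglip E F hEbd hFbd hEF
end

section
/- Let C₀, C, T > 0 and let x : [0,T] → [0,∞) be continuous with x(0) ≤ C₀. Assume that for every t ∈ [0,T]: sup_{s∈[0,t]} x(s) ≤ C₀ · exp( C · t · (sup_{s∈[0,t]} x(s))² ). Then for every t ∈ [0,T] with t ≤ log(2)/(4·C·C₀²), one has x(t) ≤ 2·C₀. -/
open Set Filter Topology

/-- Continuity/bootstrap argument: if `x` is continuous nonnegative on
`[0,T]`, `x(0) ≤ C₀`, and `sup_{[0,t]} x ≤ C₀ exp(C t (sup_{[0,t]} x)²)` for every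
`t ∈ [0,T]`, then `x(t) ≤ 2C₀` for all `t ∈ [0,T]` with `t ≤ log 2/(4 C C₀²)`. -/
theorem bootstrap_bound
    (C₀ C T : ℝ) (hC₀ : 0 < C₀) (hC : 0 < C) (hT : 0 < T)
    (x : ℝ → ℝ) (hxcont : ContinuousOn x (Icc 0 T))
    (hx0nonneg : ∀ t ∈ Icc (0 : ℝ) T, 0 ≤ x t)
    (hx0 : x 0 ≤ C₀)
    (hsup : ∀ t ∈ Icc (0 : ℝ) T,
      sSup (x '' Icc 0 t) ≤ C₀ * Real.exp (C * t * sSup (x '' Icc 0 t) ^ 2)) :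
    ∀ t ∈ Icc (0 : ℝ) T, t ≤ Real.log 2 / (4 * C * C₀ ^ 2) → x t ≤ 2 * C₀ := by
  intro t ht htτ
  by_contra hcon
  push_neg at hcon
  obtain ⟨ht0, htT⟩ := ht
  have hIcc : Icc (0:ℝ) t ⊆ Icc 0 T := Icc_subset_Icc le_rfl htT
  have hxcont' : ContinuousOn x (Icc 0 t) := hxcont.mono hIcc
  -- the set of times in [0,t] where x ≥ 2C₀
  set K : Set ℝ := Icc 0 t ∩ x ⁻¹' Ici (2 * C₀) with hK
  have hKclosed : IsClosed K :=
    hxcont'.preimage_isClosed_of_isClosed isClosed_Icc isClosed_Ici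
  have htK : t ∈ K := ⟨⟨ht0, le_rfl⟩, hcon.le⟩
  have hKne : K.Nonempty := ⟨t, htK⟩
  have hKbdd : BddBelow K := ⟨0, fun s hs => hs.1.1⟩
  set a : ℝ := sInf K with ha
  have haK : a ∈ K := hKclosed.csInf_mem hKne hKbdd
  obtain ⟨⟨ha0, hat⟩, haX⟩ := haK
  simp only [mem_preimage, mem_Ici] at haX
  -- a ≠ 0 and a ≠ t
  have h0lt : 0 < a := by
    rcases ha0.lt_or_eq with h | h
    · exact h
    · exfalso
      rw [← h] at haX
      nlinarith
  -- x u < 2C₀ for u ∈ [0,a)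
  have hlt : ∀ u ∈ Ico (0:ℝ) a, x u < 2 * C₀ := by
    intro u ⟨hu0, hua⟩
    by_contra hle
    push_neg at hle
    have : u ∈ K := ⟨⟨hu0, hua.le.trans hat⟩, hle⟩
    exact absurd (csInf_le hKbdd this) (not_le.mpr hua)
  -- x a ≤ 2C₀ by continuity from the left
  have hxa : x a ≤ 2 * C₀ := by
    have haT : a ∈ Icc (0:ℝ) T := ⟨ha0, hat.trans htT⟩
    have hcw : ContinuousWithinAt x (Ico 0 a) a :=
      (hxcont a haT).mono (fun u hu => ⟨hu.1, (hu.2.le.trans hat).trans htT⟩)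
    have hne : (𝓝[Ico (0:ℝ) a] a).NeBot := by
      rw [← mem_closure_iff_nhdsWithin_neBot, closure_Ico h0lt.ne]
      exact ⟨h0lt.le, le_rfl⟩
    exact le_of_tendsto hcw
      (Filter.eventually_of_mem self_mem_nhdsWithin fun u hu => (hlt u hu).le)
  have hxa2 : x a = 2 * C₀ := le_antisymm hxa haX
  have halt : a < t := by
    rcases hat.lt_or_eq with h | h
    · exact h
    · rw [h] at hxa2; linarith
  -- the supremum M over [0,a]
  set M : ℝ := sSup (x '' Icc 0 a) with hM
  have hIcca : Icc (0:ℝ) a ⊆ Icc 0 T := Icc_subset_Icc le_rfl (hat.trans htT)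
  have hbdd : BddAbove (x '' Icc 0 a) :=
    (isCompact_Icc.image_of_continuousOn (hxcont.mono hIcca)).bddAbove
  have hM2 : M ≤ 2 * C₀ := by
    refine csSup_le ⟨x a, a, ⟨ha0, le_rfl⟩, rfl⟩ ?_
    rintro y ⟨u, hu, rfl⟩
    rcases hu.2.lt_or_eq with h | h
    · exact (hlt u ⟨hu.1, h⟩).le
    · rw [h, hxa2]
  have hMge : 2 * C₀ ≤ M := by
    rw [← hxa2]
    exact le_csSup hbdd ⟨a, ⟨ha0, le_rfl⟩, rfl⟩
  have hMpos : 0 < M := lt_of_lt_of_le (by linarith) hMge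
  have hkey := hsup a ⟨ha0, hat.trans htT⟩
  rw [← hM] at hkey
  -- strict bound on the exponent
  have hexp : C * a * M ^ 2 < Real.log 2 := by
    have h1 : C * a * M ^ 2 ≤ C * a * (2 * C₀) ^ 2 := by
      have : M ^ 2 ≤ (2 * C₀) ^ 2 := by nlinarith
      nlinarith [mul_pos hC h0lt]
    have h2 : C * a * (2 * C₀) ^ 2 < C * t * (2 * C₀) ^ 2 := by
      have hp : (0:ℝ) < C * (2 * C₀) ^ 2 := by positivity
      nlinarith [mul_pos hp (sub_pos.mpr halt)]
    have h3 : C * t * (2 * C₀) ^ 2 ≤ Real.log 2 := by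
      have h4 : (0:ℝ) < 4 * C * C₀ ^ 2 := by positivity
      calc C * t * (2 * C₀) ^ 2 = t * (4 * C * C₀ ^ 2) := by ring
        _ ≤ (Real.log 2 / (4 * C * C₀ ^ 2)) * (4 * C * C₀ ^ 2) := by
            apply mul_le_mul_of_nonneg_right htτ h4.le
        _ = Real.log 2 := by field_simp
    linarith
  have : M < 2 * C₀ := by
    calc M ≤ C₀ * Real.exp (C * a * M ^ 2) := hkey
      _ < C₀ * Real.exp (Real.log 2) := by
          exact mul_lt_mul_of_pos_left (Real.exp_lt_exp.mpr hexp) hC₀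
      _ = C₀ * 2 := by rw [Real.exp_log (by norm_num)]
      _ = 2 * C₀ := by ring
  linarith
end

section
/- Let T > 0, λ ≥ 1, g ∈ ℝ³, K > 0, L ≥ 0, and let u : [0,T] × ℝ³ → ℝ³ be continuous with |u(s,x) − u(s,y)| ≤ L·|x − y| for all s ∈ [0,T] and x, y ∈ ℝ³. Let y ∈ ℝ³ and v₁, v₂ ∈ ℝ³, and for i = 1, 2 let (X_i, V_i) : [0,T] → ℝ³ × ℝ³ be differentiable solutions of the characteristic system X_i'(s) = V_i(s), V_i'(s) = λ(g + u(s, X_i(s)) − V_i(s)) with X_i(0) = y, V_i(0) = v_i. Assume |V_i(s)| ≤ K for all s ∈ [0,T] and i = 1, 2. Then for all t ∈ [0,T]: |X₁(t) − X₂(t)| ≤ (4K/λ)·e^{L t}. -/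
open Set

local notation "E3" => EuclideanSpace ℝ (Fin 3)

/-!
Set `W = (X₁ − X₂) + λ⁻¹(V₁ − V₂)`. The damping terms cancel in `W'`, which equals
`u(s, X₁) − u(s, X₂)` and is therefore bounded by `L |X₁ − X₂|`. Since `|Vᵢ| ≤ K`, the function
`W` stays within `δ = 2K/λ` of `X₁ − X₂` and starts within `δ` of `0`, so Gronwall's inequality
gives `|W(t)| + δ ≤ 2δ e^{Lt}`, hence `|X₁(t) − X₂(t)| ≤ 2δ e^{Lt}`.
-/

theorem gronwallBound_mul_self (δ K x : ℝ) :
    gronwallBound δ K (K * δ) x = δ * (2 * Real.exp (K * x) - 1) := by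
  rcases eq_or_ne K 0 with rfl | hK
  · simp [gronwallBound_K0]; ring
  · rw [gronwallBound_of_K_ne_0 hK, mul_div_cancel_left₀ _ hK]
    ring

section

variable {E : Type*} [NormedAddCommGroup E] [NormedSpace ℝ E]

theorem norm_inv_smul_sub_le {lam K : ℝ} (hlam : 0 < lam) {a b : E} (ha : ‖a‖ ≤ K)
    (hb : ‖b‖ ≤ K) : ‖lam⁻¹ • (a - b)‖ ≤ 2 * K / lam := by
  rw [norm_smul, norm_inv, Real.norm_of_nonneg hlam.le, inv_mul_eq_div]
  gcongr
  linarith [norm_sub_le a b]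

theorem norm_le_two_mul_exp_of_norm_sub_le {Z W W' : ℝ → E} {δ L a b : ℝ} (hL : 0 ≤ L)
    (hW : ∀ s ∈ Icc a b, HasDerivWithinAt W (W' s) (Icc a b) s)
    (hW' : ∀ s ∈ Icc a b, ‖W' s‖ ≤ L * ‖Z s‖)
    (hZW : ∀ s ∈ Icc a b, ‖Z s - W s‖ ≤ δ) (hWa : ‖W a‖ ≤ δ) :
    ∀ t ∈ Icc a b, ‖Z t‖ ≤ 2 * δ * Real.exp (L * (t - a)) := by
  have hZ : ∀ s ∈ Icc a b, ‖Z s‖ ≤ ‖W s‖ + δ := fun s hs => by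
    linarith [norm_le_norm_add_norm_sub' (Z s) (W s), hZW s hs]
  have hgronwall := norm_le_gronwallBound_of_norm_deriv_right_le
    (fun s hs => (hW s hs).continuousWithinAt)
    (fun s hs => (hW s (Ico_subset_Icc_self hs)).mono_of_mem_nhdsWithin
      (Icc_mem_nhdsGE_of_mem hs))
    hWa (ε := L * δ) fun s hs => by
      have hs' := Ico_subset_Icc_self hs
      nlinarith [hW' s hs', hZ s hs']
  intro t ht
  have hWt := hgronwall t ht
  rw [gronwallBound_mul_self] at hWt
  linarith [hZ t ht]

theorem HasDerivWithinAt.sub_add_inv_smul_sub {X₁ X₂ V₁ V₂ : ℝ → E} {F₁ F₂ : E} {lam : ℝ}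
    {s : Set ℝ} {t : ℝ} (hlam : lam ≠ 0) (hX₁ : HasDerivWithinAt X₁ (V₁ t) s t)
    (hX₂ : HasDerivWithinAt X₂ (V₂ t) s t) (hV₁ : HasDerivWithinAt V₁ (lam • (F₁ - V₁ t)) s t)
    (hV₂ : HasDerivWithinAt V₂ (lam • (F₂ - V₂ t)) s t) :
    HasDerivWithinAt (fun r => X₁ r - X₂ r + lam⁻¹ • (V₁ r - V₂ r)) (F₁ - F₂) s t := by
  refine ((hX₁.sub hX₂).add ((hV₁.sub hV₂).const_smul lam⁻¹)).congr_deriv ?_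
  rw [← smul_sub, smul_smul, inv_mul_cancel₀ hlam, one_smul]
  abel

end

theorem trajectories_close_general
    (T lam : ℝ) (hlam : 1 ≤ lam) (g : E3) (K L : ℝ)
    (hL : 0 ≤ L)
    (u : ℝ → E3 → E3)
    (hulip : ∀ s ∈ Icc (0 : ℝ) T, ∀ x y : E3, ‖u s x - u s y‖ ≤ L * ‖x - y‖)
    (y : E3) (X₁ V₁ X₂ V₂ : ℝ → E3)
    (hX₁ : ∀ s ∈ Icc (0 : ℝ) T, HasDerivWithinAt X₁ (V₁ s) (Icc 0 T) s)
    (hV₁ : ∀ s ∈ Icc (0 : ℝ) T,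
      HasDerivWithinAt V₁ (lam • (g + u s (X₁ s) - V₁ s)) (Icc 0 T) s)
    (hX₂ : ∀ s ∈ Icc (0 : ℝ) T, HasDerivWithinAt X₂ (V₂ s) (Icc 0 T) s)
    (hV₂ : ∀ s ∈ Icc (0 : ℝ) T,
      HasDerivWithinAt V₂ (lam • (g + u s (X₂ s) - V₂ s)) (Icc 0 T) s)
    (hX₁0 : X₁ 0 = y) (hX₂0 : X₂ 0 = y)
    (hV₁bd : ∀ s ∈ Icc (0 : ℝ) T, ‖V₁ s‖ ≤ K)
    (hV₂bd : ∀ s ∈ Icc (0 : ℝ) T, ‖V₂ s‖ ≤ K) :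
    ∀ t ∈ Icc (0 : ℝ) T, ‖X₁ t - X₂ t‖ ≤ 4 * K / lam * Real.exp (L * t) := by
  intro t ht
  have hlam0 : 0 < lam := one_pos.trans_le hlam
  have hVgap : ∀ s ∈ Icc (0 : ℝ) T, ‖lam⁻¹ • (V₁ s - V₂ s)‖ ≤ 2 * K / lam := fun s hs =>
    norm_inv_smul_sub_le hlam0 (hV₁bd s hs) (hV₂bd s hs)
  have hW : ∀ s ∈ Icc (0 : ℝ) T, HasDerivWithinAt
      (fun r => X₁ r - X₂ r + lam⁻¹ • (V₁ r - V₂ r)) (u s (X₁ s) - u s (X₂ s)) (Icc 0 T) s :=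
    fun s hs => by
      simpa only [add_sub_add_left_eq_sub] using
        (hX₁ s hs).sub_add_inv_smul_sub hlam0.ne' (hX₂ s hs) (hV₁ s hs) (hV₂ s hs)
  have hZW : ∀ s ∈ Icc (0 : ℝ) T,
      ‖(X₁ s - X₂ s) - (X₁ s - X₂ s + lam⁻¹ • (V₁ s - V₂ s))‖ ≤ 2 * K / lam := fun s hs => by
    simpa using hVgap s hs
  have hW0 : ‖X₁ 0 - X₂ 0 + lam⁻¹ • (V₁ 0 - V₂ 0)‖ ≤ 2 * K / lam := by
    simpa [hX₁0, hX₂0] using hVgap 0 ⟨le_rfl, ht.1.trans ht.2⟩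
  calc ‖X₁ t - X₂ t‖
      ≤ 2 * (2 * K / lam) * Real.exp (L * (t - 0)) :=
        norm_le_two_mul_exp_of_norm_sub_le hL hW (fun s hs => hulip s hs _ _) hZW hW0 t ht
    _ = 4 * K / lam * Real.exp (L * t) := by rw [sub_zero]; ring

/-- If `u(s,·)` is `L`-Lipschitz, `λ ≥ 1`, and `(Xᵢ, Vᵢ)` solve the
characteristic system with the same initial position `y` and velocities `vᵢ`, with
`|Vᵢ| ≤ K` throughout, then `|X₁(t) − X₂(t)| ≤ (4K/λ) e^{Lt}`. -/
theorem trajectories_close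
    (T lam : ℝ) (hT : 0 < T) (hlam : 1 ≤ lam) (g : E3) (K L : ℝ)
    (hK : 0 < K) (hL : 0 ≤ L)
    (u : ℝ → E3 → E3) (hucont : Continuous fun p : ℝ × E3 => u p.1 p.2)
    (hulip : ∀ s ∈ Icc (0 : ℝ) T, ∀ x y : E3, ‖u s x - u s y‖ ≤ L * ‖x - y‖)
    (y v₁ v₂ : E3) (X₁ V₁ X₂ V₂ : ℝ → E3)
    (hX₁ : ∀ s ∈ Icc (0 : ℝ) T, HasDerivWithinAt X₁ (V₁ s) (Icc 0 T) s)
    (hV₁ : ∀ s ∈ Icc (0 : ℝ) T,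
      HasDerivWithinAt V₁ (lam • (g + u s (X₁ s) - V₁ s)) (Icc 0 T) s)
    (hX₂ : ∀ s ∈ Icc (0 : ℝ) T, HasDerivWithinAt X₂ (V₂ s) (Icc 0 T) s)
    (hV₂ : ∀ s ∈ Icc (0 : ℝ) T,
      HasDerivWithinAt V₂ (lam • (g + u s (X₂ s) - V₂ s)) (Icc 0 T) s)
    (hX₁0 : X₁ 0 = y) (hV₁0 : V₁ 0 = v₁) (hX₂0 : X₂ 0 = y) (hV₂0 : V₂ 0 = v₂)
    (hV₁bd : ∀ s ∈ Icc (0 : ℝ) T, ‖V₁ s‖ ≤ K)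
    (hV₂bd : ∀ s ∈ Icc (0 : ℝ) T, ‖V₂ s‖ ≤ K) :
    ∀ t ∈ Icc (0 : ℝ) T, ‖X₁ t - X₂ t‖ ≤ 4 * K / lam * Real.exp (L * t) :=
  trajectories_close_general T lam hlam g K L hL u hulip y X₁ V₁ X₂ V₂ hX₁ hV₁ hX₂ hV₂ hX₁0 hX₂0
    hV₁bd hV₂bd
end
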